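/- For all real ν > 1/2, the function x ↦ K_{ν−1}(x)/K_ν(x) is strictly increasing on (0, ∞). -/

import Mathlib

open Real

/-- Modified Bessel function of the first kind `I_ν(x)` (for `x > 0`),
defined by its standard power series. -/
noncomputable def besselI (ν x : ℝ) : ℝ :=
  ∑' k : ℕ, (x / 2) ^ (2 * k) / ((Nat.factorial k : ℝ) * Real.Gamma (k + ν + 1)) * (x / 2) ^ ν

/-- Modified Bessel function of the second kind `K_ν(x)` (for `x > 0`),
defined by its standard integral representation. -/
noncomputable def besselK (ν x : ℝ) : ℝ :=
  ∫ t in Set.Ioi (0 : ℝ), Real.exp (-x * Real.cosh t) * Real.cosh (ν * t)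

/-!
For `x < y` the claim is `K_{ν-1}(x) K_ν(y) < K_{ν-1}(y) K_ν(x)`. Writing both products as double
integrals over `(0, ∞)²` and symmetrizing in the two integration variables `(s, t)`, the
difference becomes the integral of
`(e^{-x cosh s - y cosh t} - e^{-x cosh t - y cosh s}) (cosh νs cosh (ν-1)t - cosh (ν-1)s cosh νt)`.
Both factors have the sign of `s² - t²`: the first because `x < y`, the second, by the
product-to-sum formula, because `(ν - 1)² < ν²`. So the integrand is nonnegative and positive
off the diagonals.
-/

open MeasureTheory Set Function

namespace Real

theorem one_add_sq_div_two_le_cosh (t : ℝ) : 1 + t ^ 2 / 2 ≤ cosh t := by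
  have := sum_le_hasSum (Finset.range 2) (fun n _ => by rw [pow_mul]; positivity) (hasSum_cosh t)
  simpa [Finset.sum_range_succ] using this

theorem cosh_le_exp_abs (t : ℝ) : cosh t ≤ exp |t| := by
  rw [← cosh_abs, cosh_eq]
  linarith [exp_le_exp.2 (neg_le_self (abs_nonneg t))]

theorem cosh_mul_mul_cosh_mul_lt {a b s t : ℝ} (hab : a ^ 2 < b ^ 2) (hts : t ^ 2 < s ^ 2) :
    cosh (a * s) * cosh (b * t) < cosh (b * s) * cosh (a * t) := by
  have product_to_sum (X Y : ℝ) : 2 * (cosh X * cosh Y) = cosh (X + Y) + cosh (X - Y) := by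
    rw [cosh_add, cosh_sub]; ring
  have hpos : 0 < (b ^ 2 - a ^ 2) * (s ^ 2 - t ^ 2) := mul_pos (by linarith) (by linarith)
  have hadd : cosh (a * s + b * t) < cosh (b * s + a * t) := by
    rw [cosh_lt_cosh, ← sq_lt_sq]; nlinarith
  have hsub : cosh (a * s - b * t) < cosh (b * s - a * t) := by
    rw [cosh_lt_cosh, ← sq_lt_sq]; nlinarith
  linarith [product_to_sum (a * s) (b * t), product_to_sum (b * s) (a * t)]

end Real

section ProductIntegral

variable {α β : Type*} [MeasurableSpace α] [MeasurableSpace β] {μ : Measure α} {ν : Measure β}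

theorem integral_prod_mul_sub_mul [SFinite μ] [SFinite ν] {f₁ f₂ : α → ℝ} {g₁ g₂ : β → ℝ}
    (hf₁ : Integrable f₁ μ) (hf₂ : Integrable f₂ μ) (hg₁ : Integrable g₁ ν)
    (hg₂ : Integrable g₂ ν) :
    ∫ z, (f₁ z.1 * g₁ z.2 - f₂ z.1 * g₂ z.2) ∂μ.prod ν =
      (∫ x, f₁ x ∂μ) * (∫ y, g₁ y ∂ν) - (∫ x, f₂ x ∂μ) * (∫ y, g₂ y ∂ν) := by
  rw [integral_sub (hf₁.mul_prod hg₁) (hf₂.mul_prod hg₂), integral_prod_mul, integral_prod_mul]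

theorem integral_add_swap_eq_two_mul [SFinite μ] {F : α × α → ℝ} (hF : Integrable F (μ.prod μ)) :
    ∫ z, (F z + F z.swap) ∂μ.prod μ = 2 * ∫ z, F z ∂μ.prod μ := by
  rw [integral_add hF (hF.swap : Integrable (fun z => F z.swap) _), integral_prod_swap]
  ring

end ProductIntegral

noncomputable def besselKIntegrand (ν x t : ℝ) : ℝ :=
  exp (-x * cosh t) * cosh (ν * t)

theorem besselK_eq_integral_besselKIntegrand (ν x : ℝ) :
    besselK ν x = ∫ t in Ioi 0, besselKIntegrand ν x t :=
  rfl

theorem besselKIntegrand_pos (ν x t : ℝ) : 0 < besselKIntegrand ν x t :=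
  mul_pos (exp_pos _) (cosh_pos _)

theorem besselKIntegrand_le {ν x t : ℝ} (hx : 0 < x) (ht : 0 ≤ t) :
    besselKIntegrand ν x t ≤ exp ((|ν| + 1) ^ 2 / (2 * x)) * exp (-1 * t) := by
  have hcosh : t ^ 2 / 2 ≤ cosh t := by linarith [one_add_sq_div_two_le_cosh t]
  -- `k t - x t² / 2 ≤ k² / (2 x)` is AM-GM, with `k = |ν| + 1`
  have hexponent : |ν| * t - x * cosh t ≤ (|ν| + 1) ^ 2 / (2 * x) - t := by
    rw [le_sub_iff_add_le, le_div_iff₀ (by positivity)]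
    nlinarith [sq_nonneg (|ν| + 1 - x * t), mul_le_mul_of_nonneg_left hcosh hx.le]
  calc besselKIntegrand ν x t ≤ exp (-x * cosh t) * exp (|ν| * t) := by
        refine mul_le_mul_of_nonneg_left ?_ (exp_pos _).le
        simpa [abs_mul, abs_of_nonneg ht] using cosh_le_exp_abs (ν * t)
    _ = exp (|ν| * t - x * cosh t) := by rw [← exp_add]; ring_nf
    _ ≤ exp ((|ν| + 1) ^ 2 / (2 * x) - t) := exp_le_exp.2 hexponent
    _ = exp ((|ν| + 1) ^ 2 / (2 * x)) * exp (-1 * t) := by rw [← exp_add]; ring_nf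

theorem integrableOn_besselKIntegrand (ν : ℝ) {x : ℝ} (hx : 0 < x) :
    IntegrableOn (besselKIntegrand ν x) (Ioi 0) := by
  have hcont : Continuous (besselKIntegrand ν x) := by
    unfold besselKIntegrand; fun_prop
  have hdom : IntegrableOn (fun t => exp ((|ν| + 1) ^ 2 / (2 * x)) * exp (-1 * t)) (Ioi 0) :=
    (exp_neg_integrableOn_Ioi 0 one_pos).const_mul _
  refine hdom.mono' hcont.aestronglyMeasurable ?_
  filter_upwards [ae_restrict_mem measurableSet_Ioi] with t ht
  rw [norm_of_nonneg (besselKIntegrand_pos ν x t).le]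
  exact besselKIntegrand_le hx (le_of_lt ht)

theorem besselK_pos (ν : ℝ) {x : ℝ} (hx : 0 < x) : 0 < besselK ν x := by
  rw [besselK_eq_integral_besselKIntegrand, setIntegral_pos_iff_support_of_nonneg_ae
    (Filter.Eventually.of_forall fun t => (besselKIntegrand_pos ν x t).le)
    (integrableOn_besselKIntegrand ν hx)]
  simp [support_eq_univ fun t => (besselKIntegrand_pos ν x t).ne']

noncomputable def besselKCross (ν x y : ℝ) (z : ℝ × ℝ) : ℝ :=
  besselKIntegrand (ν - 1) y z.1 * besselKIntegrand ν x z.2 -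
    besselKIntegrand (ν - 1) x z.1 * besselKIntegrand ν y z.2

theorem besselKCross_add_swap (ν x y : ℝ) (z : ℝ × ℝ) :
    besselKCross ν x y z + besselKCross ν x y z.swap =
      (exp (-x * cosh z.1) * exp (-y * cosh z.2) - exp (-x * cosh z.2) * exp (-y * cosh z.1)) *
        (cosh (ν * z.1) * cosh ((ν - 1) * z.2) - cosh ((ν - 1) * z.1) * cosh (ν * z.2)) := by
  simp only [besselKCross, besselKIntegrand, Prod.fst_swap, Prod.snd_swap]
  ring

theorem besselKCross_add_swap_pos {ν x y : ℝ} (hν : 1 / 2 < ν) (hxy : x < y) {z : ℝ × ℝ}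
    (hz : z.2 ^ 2 < z.1 ^ 2) : 0 < besselKCross ν x y z + besselKCross ν x y z.swap := by
  have hcosh : cosh z.2 < cosh z.1 := cosh_lt_cosh.2 (sq_lt_sq.1 hz)
  have hexp : exp (-x * cosh z.2) * exp (-y * cosh z.1) <
      exp (-x * cosh z.1) * exp (-y * cosh z.2) := by
    rw [← exp_add, ← exp_add, exp_lt_exp]; nlinarith
  have horder : (ν - 1) ^ 2 < ν ^ 2 := by nlinarith
  rw [besselKCross_add_swap]
  exact mul_pos (sub_pos.2 hexp) (sub_pos.2 (cosh_mul_mul_cosh_mul_lt horder hz))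

theorem besselKCross_add_swap_nonneg {ν x y : ℝ} (hν : 1 / 2 < ν) (hxy : x < y) (z : ℝ × ℝ) :
    0 ≤ besselKCross ν x y z + besselKCross ν x y z.swap := by
  rcases lt_trichotomy (z.2 ^ 2) (z.1 ^ 2) with h | h | h
  · exact (besselKCross_add_swap_pos hν hxy h).le
  · have hcosh : cosh z.2 = cosh z.1 := by
      rw [← cosh_abs, (sq_eq_sq_iff_abs_eq_abs _ _).1 h, cosh_abs]
    rw [besselKCross_add_swap, hcosh, sub_self, zero_mul]
  · simpa [add_comm] using (besselKCross_add_swap_pos hν hxy (z := z.swap) h).le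

theorem volume_Ioi_prod_setOf_sq_lt_pos :
    0 < (volume.restrict (Ioi (0 : ℝ))).prod (volume.restrict (Ioi 0))
      {z : ℝ × ℝ | z.2 ^ 2 < z.1 ^ 2} := by
  have hbox : Ioo (1 : ℝ) 2 ×ˢ Ioo 0 1 ⊆ {z : ℝ × ℝ | z.2 ^ 2 < z.1 ^ 2} := by
    rintro ⟨s, t⟩ ⟨⟨hs, -⟩, ⟨ht₀, ht₁⟩⟩
    show t ^ 2 < s ^ 2
    nlinarith
  refine lt_of_lt_of_le ?_ (measure_mono hbox)
  rw [Measure.prod_prod, Measure.restrict_apply measurableSet_Ioo,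
    Measure.restrict_apply measurableSet_Ioo,
    inter_eq_left.2 (Ioo_subset_Ioi_self.trans (Ioi_subset_Ioi zero_le_one)),
    inter_eq_left.2 Ioo_subset_Ioi_self]
  simp

theorem besselK_mul_besselK_lt {ν x y : ℝ} (hν : 1 / 2 < ν) (hx : 0 < x) (hxy : x < y) :
    besselK (ν - 1) x * besselK ν y < besselK (ν - 1) y * besselK ν x := by
  set μ := volume.restrict (Ioi (0 : ℝ))
  have hint (a : ℝ) {u : ℝ} (hu : 0 < u) : Integrable (besselKIntegrand a u) μ :=
    integrableOn_besselKIntegrand a hu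
  have hy : 0 < y := hx.trans hxy
  have hF : Integrable (besselKCross ν x y) (μ.prod μ) :=
    ((hint _ hy).mul_prod (hint _ hx)).sub ((hint _ hx).mul_prod (hint _ hy))
  have hval : ∫ z, besselKCross ν x y z ∂μ.prod μ =
      besselK (ν - 1) y * besselK ν x - besselK (ν - 1) x * besselK ν y :=
    integral_prod_mul_sub_mul (hint _ hy) (hint _ hx) (hint _ hx) (hint _ hy)
  have hsymm : 0 < ∫ z, (besselKCross ν x y z + besselKCross ν x y z.swap) ∂μ.prod μ := by
    rw [integral_pos_iff_support_of_nonneg (besselKCross_add_swap_nonneg hν hxy)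
      (hF.add hF.swap)]
    exact volume_Ioi_prod_setOf_sq_lt_pos.trans_le
      (measure_mono fun z hz => (besselKCross_add_swap_pos hν hxy hz).ne')
  rw [integral_add_swap_eq_two_mul hF, hval] at hsymm
  linarith

theorem besselK_ratio_strictMonoOn (ν : ℝ) (hν : 1 / 2 < ν) :
    StrictMonoOn (fun x : ℝ => besselK (ν - 1) x / besselK ν x) (Set.Ioi 0) := by
  intro x hx y hy hxy
  exact (div_lt_div_iff₀ (besselK_pos ν hx) (besselK_pos ν hy)).2
    (besselK_mul_besselK_lt hν hx hxy)
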